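/- Let σ and σ′ be two nondegenerate tetrahedra in ℝ³ (each spanned by 4 affinely independent points) whose vertices lie in a common point set in general position. If σ and σ′ do not intersect properly, i.e. conv(σ) ∩ conv(σ′) ≠ conv(σ ∩ σ′), then there exists a 5-element subset of vert(σ) ∪ vert(σ′) that is affinely dependent and whose Radon partition (X⁺, X⁻) satisfies X⁺ ⊆ vert(σ) and X⁻ ⊆ vert(σ′): there exist coefficients λ, not all zero, summing to 0, with ∑ λᵢ aᵢ = 0 in homogeneous form, such that the points with positive coefficients lie in vert(σ), the points with negative coefficients lie in vert(σ′), and the convex hulls of these two subsets intersect in a single point. -/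

import Mathlib

open Finset

private def IsGood (σ σ' s : Finset (Fin 3 → ℝ)) (w : (Fin 3 → ℝ) → ℝ) : Prop :=
  s ⊆ σ ∪ σ' ∧ (∑ x ∈ s, w x) = 0 ∧ (∑ x ∈ s, w x • x) = 0 ∧
  (∀ x ∈ s, w x ≠ 0) ∧ s.Nonempty ∧
  (∀ x ∈ s, 0 < w x → x ∈ σ) ∧ (∀ x ∈ s, w x < 0 → x ∈ σ')

private lemma gp_dep_zero
    (A : Finset (Fin 3 → ℝ))
    (hgen : ∀ s ⊆ A, s.card = 4 →
      AffineIndependent ℝ (fun x : {x : Fin 3 → ℝ // x ∈ s} => x.1))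
    (hA : 4 ≤ A.card)
    (s : Finset (Fin 3 → ℝ)) (hsA : s ⊆ A) (hcard : s.card ≤ 4)
    (w : (Fin 3 → ℝ) → ℝ)
    (hw0 : ∑ x ∈ s, w x = 0) (hw1 : ∑ x ∈ s, w x • x = 0) :
    ∀ x ∈ s, w x = 0 := by
  classical
  obtain ⟨t, hst, htA, htcard⟩ := Finset.exists_subsuperset_card_eq hsA hcard hA
  have hind := hgen t htA htcard
  set v : (Fin 3 → ℝ) → ℝ := fun x => if x ∈ s then w x else 0 with hv
  have hsum1 : ∑ x ∈ t, v x = 0 := by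
    rw [← Finset.sum_subset hst (fun x _ hx => by simp [hv, hx])]
    rw [← hw0]
    exact Finset.sum_congr rfl fun x hx => by simp [hv, hx]
  have hsum2 : ∑ x ∈ t, v x • x = 0 := by
    rw [← Finset.sum_subset hst (fun x _ hx => by simp [hv, hx])]
    rw [← hw1]
    exact Finset.sum_congr rfl fun x hx => by simp [hv, hx]
  have key := affineIndependent_iff.mp hind t.attach (fun i => v i.1) ?_ ?_
  · intro x hx
    have hxt : x ∈ t := hst hx
    have := key ⟨x, hxt⟩ (Finset.mem_attach _ _)
    simpa [hv, hx] using this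
  · rw [Finset.sum_attach t (fun x => v x)]; exact hsum1
  · rw [Finset.sum_attach t (fun x => v x • x)]; exact hsum2

/-- Any ≥ 5 points in ℝ³ admit a nontrivial affine dependence, supported on them. -/

private lemma exists_dep_of_five_le_card
    (t : Finset (Fin 3 → ℝ)) (h5 : 5 ≤ t.card) :
    ∃ f : (Fin 3 → ℝ) → ℝ, ∑ x ∈ t, f x • x = 0 ∧ ∑ x ∈ t, f x = 0 ∧
      (∃ x ∈ t, f x ≠ 0) ∧ ∀ x, x ∉ t → f x = 0 := by
  classical
  have hni : ¬ AffineIndependent ℝ ((↑) : t → (Fin 3 → ℝ)) := by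
    intro h
    have h1 := h.card_le_finrank_succ
    have h2 : Module.finrank ℝ (vectorSpan ℝ (Set.range ((↑) : t → (Fin 3 → ℝ)))) ≤ 3 := by
      have := Submodule.finrank_le (vectorSpan ℝ (Set.range ((↑) : t → (Fin 3 → ℝ))))
      simpa using this
    have h3 : Fintype.card t = t.card := Fintype.card_coe t
    omega
  obtain ⟨f, hf1, hf2, x, hxt, hfx⟩ := exists_nontrivial_relation_sum_zero_of_not_affine_ind hni
  refine ⟨fun x => if x ∈ t then f x else 0, ?_, ?_, ⟨x, hxt, by simp [hxt, hfx]⟩,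
    fun x hx => by simp [hx]⟩
  · rw [← hf1]; exact Finset.sum_congr rfl fun x hx => by simp [hx]
  · rw [← hf2]; exact Finset.sum_congr rfl fun x hx => by simp [hx]

private lemma dep_multiple
    (A : Finset (Fin 3 → ℝ))
    (hgen : ∀ s ⊆ A, s.card = 4 →
      AffineIndependent ℝ (fun x : {x : Fin 3 → ℝ // x ∈ s} => x.1))
    (hA : 4 ≤ A.card)
    (s : Finset (Fin 3 → ℝ)) (hsA : s ⊆ A) (hcard : s.card = 5)
    (w : (Fin 3 → ℝ) → ℝ)
    (hw0 : ∑ x ∈ s, w x = 0) (hw1 : ∑ x ∈ s, w x • x = 0)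
    (hwne : ∀ x ∈ s, w x ≠ 0)
    (d : (Fin 3 → ℝ) → ℝ)
    (hd0 : ∑ x ∈ s, d x = 0) (hd1 : ∑ x ∈ s, d x • x = 0)
    (z : Fin 3 → ℝ) (hz : z ∈ s) :
    ∀ x ∈ s, d x = (d z / w z) * w x := by
  classical
  set c : ℝ := d z / w z with hc
  set e : (Fin 3 → ℝ) → ℝ := fun x => d x - c * w x with he
  have hez : e z = 0 := by
    have hwz := hwne z hz
    simp only [he, hc]
    field_simp
    ring
  have hes : ∑ x ∈ s, e x = 0 := by
    simp only [he, Finset.sum_sub_distrib, ← Finset.mul_sum, hw0, hd0, mul_zero, sub_zero]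
  have hes' : ∑ x ∈ s, e x • x = 0 := by
    have : ∀ x, e x • x = d x • x - c • (w x • x) := by
      intro x; simp [he, sub_smul, smul_smul]
    simp only [this, Finset.sum_sub_distrib, ← Finset.smul_sum, hw1, hd1, smul_zero, sub_zero]
  have h1 : ∑ x ∈ s.erase z, e x = 0 := by
    have := Finset.sum_erase_add s e hz
    linarith [this]
  have h2 : ∑ x ∈ s.erase z, e x • x = 0 := by
    have h := Finset.sum_erase_add s (fun x => e x • x) hz
    simp only [hes', hez, zero_smul, add_zero] at h
    exact h
  have hzero := gp_dep_zero A hgen hA (s.erase z) ((Finset.erase_subset _ _).trans hsA)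
    (by rw [Finset.card_erase_of_mem hz, hcard]) e h1 h2
  intro x hx
  rcases eq_or_ne x z with rfl | hne
  · have : e x = 0 := hez
    simp only [he] at this; linarith
  · have : e x = 0 := hzero x (Finset.mem_erase.mpr ⟨hne, hx⟩)
    simp only [he] at this; linarith

private lemma exists_good (σ σ' : Finset (Fin 3 → ℝ))
    (himproper : convexHull ℝ (σ : Set (Fin 3 → ℝ)) ∩ convexHull ℝ (σ' : Set (Fin 3 → ℝ)) ≠
      convexHull ℝ ((σ ∩ σ' : Finset (Fin 3 → ℝ)) : Set (Fin 3 → ℝ))) :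
    ∃ s w, IsGood σ σ' s w := by
  classical
  have hsub : convexHull ℝ ((σ ∩ σ' : Finset (Fin 3 → ℝ)) : Set (Fin 3 → ℝ)) ⊆
      convexHull ℝ (σ : Set (Fin 3 → ℝ)) ∩ convexHull ℝ (σ' : Set (Fin 3 → ℝ)) :=
    Set.subset_inter
      (convexHull_mono (by simp [Finset.coe_subset]))
      (convexHull_mono (by simp [Finset.coe_subset]))
  have hnot : ¬ (convexHull ℝ (σ : Set (Fin 3 → ℝ)) ∩ convexHull ℝ (σ' : Set (Fin 3 → ℝ)) ⊆
      convexHull ℝ ((σ ∩ σ' : Finset (Fin 3 → ℝ)) : Set (Fin 3 → ℝ))) :=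
    fun h => himproper (le_antisymm h hsub)
  obtain ⟨p, hp, hpnot⟩ := Set.not_subset.mp hnot
  obtain ⟨μ, hμ0, hμ1, hμ2⟩ := Finset.mem_convexHull'.mp hp.1
  obtain ⟨ν, hν0, hν1, hν2⟩ := Finset.mem_convexHull'.mp hp.2
  set w : (Fin 3 → ℝ) → ℝ :=
    fun x => (if x ∈ σ then μ x else 0) - (if x ∈ σ' then ν x else 0) with hw
  set s : Finset (Fin 3 → ℝ) := (σ ∪ σ').filter (fun x => w x ≠ 0) with hs
  have hsσ : s ⊆ σ ∪ σ' := Finset.filter_subset _ _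
  have hzero : ∀ x ∈ σ ∪ σ', x ∉ s → w x = 0 := by
    intro x hx hxs
    by_contra h
    exact hxs (Finset.mem_filter.mpr ⟨hx, h⟩)
  have hμext : ∑ x ∈ σ ∪ σ', (if x ∈ σ then μ x else 0) = 1 := by
    rw [← Finset.sum_subset Finset.subset_union_left (fun x _ hx => if_neg hx)]
    rw [← hμ1]
    exact Finset.sum_congr rfl fun x hx => if_pos hx
  have hνext : ∑ x ∈ σ ∪ σ', (if x ∈ σ' then ν x else 0) = 1 := by
    rw [← Finset.sum_subset Finset.subset_union_right (fun x _ hx => if_neg hx)]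
    rw [← hν1]
    exact Finset.sum_congr rfl fun x hx => if_pos hx
  have hμextv : ∑ x ∈ σ ∪ σ', (if x ∈ σ then μ x else 0) • x = p := by
    rw [← Finset.sum_subset Finset.subset_union_left (fun x _ hx => by simp [if_neg hx])]
    rw [← hμ2]
    exact Finset.sum_congr rfl fun x hx => by rw [if_pos hx]
  have hνextv : ∑ x ∈ σ ∪ σ', (if x ∈ σ' then ν x else 0) • x = p := by
    rw [← Finset.sum_subset Finset.subset_union_right (fun x _ hx => by simp [if_neg hx])]
    rw [← hν2]
    exact Finset.sum_congr rfl fun x hx => by rw [if_pos hx]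
  have hsum0 : ∑ x ∈ σ ∪ σ', w x = 0 := by
    simp only [hw, Finset.sum_sub_distrib, hμext, hνext, sub_self]
  have hsum1 : ∑ x ∈ σ ∪ σ', w x • x = 0 := by
    simp only [hw, sub_smul, Finset.sum_sub_distrib, hμextv, hνextv, sub_self]
  refine ⟨s, w, hsσ, ?_, ?_, fun x hx => (Finset.mem_filter.mp hx).2, ?_, ?_, ?_⟩
  · rw [Finset.sum_subset hsσ hzero]; exact hsum0
  · rw [Finset.sum_subset hsσ (fun x hx hxs => by rw [hzero x hx hxs, zero_smul])]; exact hsum1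
  · -- nonempty: otherwise p ∈ convexHull (σ ∩ σ')
    rw [Finset.nonempty_iff_ne_empty]
    intro hempty
    have hall : ∀ x ∈ σ ∪ σ', w x = 0 := fun x hx =>
      hzero x hx (by rw [hempty]; exact Finset.notMem_empty x)
    apply hpnot
    refine Finset.mem_convexHull'.mpr ⟨μ, fun y hy => hμ0 y (Finset.mem_inter.mp hy).1, ?_, ?_⟩
    · rw [Finset.sum_subset Finset.inter_subset_left ?van]
      · exact hμ1
      case van =>
        intro x hx hxi
        have hxσ' : x ∉ σ' := fun h => hxi (Finset.mem_inter.mpr ⟨hx, h⟩)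
        have := hall x (Finset.mem_union_left _ hx)
        simp only [hw, if_pos hx, if_neg hxσ', sub_zero] at this
        exact this
    · rw [Finset.sum_subset Finset.inter_subset_left ?vanv]
      · exact hμ2
      case vanv =>
        intro x hx hxi
        have hxσ' : x ∉ σ' := fun h => hxi (Finset.mem_inter.mpr ⟨hx, h⟩)
        have := hall x (Finset.mem_union_left _ hx)
        simp only [hw, if_pos hx, if_neg hxσ', sub_zero] at this
        rw [this, zero_smul]
  · -- positive ⇒ in σ
    intro x hx hpos
    by_contra hxσ
    have h1 : (0:ℝ) ≤ (if x ∈ σ' then ν x else 0) := by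
      split_ifs with h
      · exact hν0 x h
      · exact le_refl 0
    have hle : w x ≤ 0 := by
      simp only [hw, if_neg hxσ, zero_sub]
      linarith
    linarith
  · -- negative ⇒ in σ'
    intro x hx hneg
    by_contra hxσ'
    have h1 : (0:ℝ) ≤ (if x ∈ σ then μ x else 0) := by
      split_ifs with h
      · exact hμ0 x h
      · exact le_refl 0
    have hge : 0 ≤ w x := by
      simp only [hw, if_neg hxσ', sub_zero]
      exact h1
    linarith

private lemma reduce_good (σ σ' s : Finset (Fin 3 → ℝ)) (w : (Fin 3 → ℝ) → ℝ)
    (hg : IsGood σ σ' s w) (h6 : 6 ≤ s.card) :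
    ∃ s' w', IsGood σ σ' s' w' ∧ s'.card < s.card := by
  classical
  obtain ⟨hs1, hs2, hs3, hs4, ⟨x0, hx0⟩, hs6, hs7⟩ := hg
  have hter : 5 ≤ (s.erase x0).card := by
    rw [Finset.card_erase_of_mem hx0]; omega
  obtain ⟨f, hf1, hf2, ⟨x1, hx1t, hx1f⟩, hf4⟩ := exists_dep_of_five_le_card (s.erase x0) hter
  have hfx0 : f x0 = 0 := hf4 x0 (Finset.notMem_erase _ _)
  -- sums of f over s
  have hfs2 : ∑ x ∈ s, f x = 0 := by
    have := Finset.sum_erase_add s f hx0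
    rw [hf2, hfx0] at this; linarith
  have hfs1 : ∑ x ∈ s, f x • x = 0 := by
    have := Finset.sum_erase_add s (fun x => f x • x) hx0
    simp only [hf1, hfx0, zero_smul, add_zero] at this
    exact this.symm
  -- minimize |w x / f x| over the support of f in s
  set F : Finset (Fin 3 → ℝ) := s.filter (fun x => f x ≠ 0) with hF
  have hFne : F.Nonempty :=
    ⟨x1, Finset.mem_filter.mpr ⟨Finset.mem_of_mem_erase hx1t, hx1f⟩⟩
  obtain ⟨y, hyF, hymin⟩ := Finset.exists_min_image F (fun x => |w x / f x|) hFne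
  have hys : y ∈ s := (Finset.mem_filter.mp hyF).1
  have hfy : f y ≠ 0 := (Finset.mem_filter.mp hyF).2
  set c : ℝ := -(w y / f y) with hc
  set u : (Fin 3 → ℝ) → ℝ := fun x => w x + c * f x with hu
  have huy : u y = 0 := by
    simp only [hu, hc]
    field_simp
    ring
  -- sign preservation
  have hsign : ∀ x ∈ s, (0 ≤ w x → 0 ≤ u x) ∧ (w x ≤ 0 → u x ≤ 0) := by
    intro x hx
    rcases eq_or_ne (f x) 0 with hfx | hfx
    · constructor <;> intro h <;> simp [hu, hfx] <;> linarith
    · have hxF : x ∈ F := Finset.mem_filter.mpr ⟨hx, hfx⟩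
      have hmin := hymin x hxF
      have habs : |c * f x| ≤ |w x| := by
        have h1 : |c| = |w y / f y| := by rw [hc, abs_neg]
        have h2 : |c * f x| = |w y / f y| * |f x| := by rw [abs_mul, h1]
        have h3 : |w x / f x| * |f x| = |w x| := by
          rw [abs_div]
          field_simp
        calc |c * f x| = |w y / f y| * |f x| := h2
          _ ≤ |w x / f x| * |f x| := by
              apply mul_le_mul_of_nonneg_right hmin (abs_nonneg _)
          _ = |w x| := h3
      have h4 := neg_abs_le (c * f x)
      have h5 := le_abs_self (c * f x)
      constructor
      · intro h
        have : |w x| = w x := abs_of_nonneg h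
        simp only [hu]
        linarith
      · intro h
        have : |w x| = -w x := abs_of_nonpos h
        simp only [hu]
        linarith
  set s' : Finset (Fin 3 → ℝ) := s.filter (fun x => u x ≠ 0) with hs'
  have hs's : s' ⊆ s := Finset.filter_subset _ _
  have huz : ∀ x ∈ s, x ∉ s' → u x = 0 := by
    intro x hx hxs'
    by_contra h
    exact hxs' (Finset.mem_filter.mpr ⟨hx, h⟩)
  have hyns' : y ∉ s' := by
    intro h
    exact (Finset.mem_filter.mp h).2 huy
  have hssub : s' ⊂ s := ⟨hs's, fun h => hyns' (h hys)⟩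
  refine ⟨s', u, ⟨hs's.trans hs1, ?_, ?_, fun x hx => (Finset.mem_filter.mp hx).2, ?_, ?_, ?_⟩,
    Finset.card_lt_card hssub⟩
  · rw [Finset.sum_subset hs's huz]
    simp only [hu, Finset.sum_add_distrib, ← Finset.mul_sum, hs2, hfs2, mul_zero, add_zero]
  · rw [Finset.sum_subset hs's (fun x hx hxs' => by rw [huz x hx hxs', zero_smul])]
    have : ∀ x, u x • x = w x • x + c • (f x • x) := by
      intro x; simp [hu, add_smul, smul_smul]
    simp only [this, Finset.sum_add_distrib, ← Finset.smul_sum, hs3, hfs1, smul_zero, add_zero]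
  · -- s' nonempty : x0 stays
    refine ⟨x0, Finset.mem_filter.mpr ⟨hx0, ?_⟩⟩
    simp only [hu, hfx0, mul_zero, add_zero]
    exact hs4 x0 hx0
  · intro x hx hpos
    have hxs := hs's hx
    apply hs6 x hxs
    rcases lt_trichotomy (w x) 0 with h | h | h
    · exact absurd ((hsign x hxs).2 h.le) (by linarith)
    · exact absurd h (hs4 x hxs)
    · exact h
  · intro x hx hneg
    have hxs := hs's hx
    apply hs7 x hxs
    rcases lt_trichotomy (w x) 0 with h | h | h
    · exact h
    · exact absurd h (hs4 x hxs)
    · exact absurd ((hsign x hxs).1 h.le) (by linarith)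

/-- If two nondegenerate tetrahedra in ℝ³, with vertices in a common point set in
general position (no 4 coplanar), do not intersect properly, then some 5 of their
vertices are affinely dependent, with a Radon partition `(X⁺, X⁻)` such that
`X⁺ ⊆ vert σ`, `X⁻ ⊆ vert σ'`, and the convex hulls of `X⁺` and `X⁻` intersect
in a single point. -/
theorem improper_intersection_gives_radon_partition
    (A : Finset (Fin 3 → ℝ))
    (hgen : ∀ s ⊆ A, s.card = 4 →
      AffineIndependent ℝ (fun x : {x : Fin 3 → ℝ // x ∈ s} => x.1))
    (σ σ' : Finset (Fin 3 → ℝ))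
    (hσA : σ ⊆ A) (hσ'A : σ' ⊆ A)
    (hσcard : σ.card = 4) (hσ'card : σ'.card = 4)
    (hσindep : AffineIndependent ℝ (fun x : {x : Fin 3 → ℝ // x ∈ σ} => x.1))
    (hσ'indep : AffineIndependent ℝ (fun x : {x : Fin 3 → ℝ // x ∈ σ'} => x.1))
    (himproper : convexHull ℝ (σ : Set (Fin 3 → ℝ)) ∩ convexHull ℝ (σ' : Set (Fin 3 → ℝ)) ≠
      convexHull ℝ ((σ ∩ σ' : Finset (Fin 3 → ℝ)) : Set (Fin 3 → ℝ))) :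
    ∃ s : Finset (Fin 3 → ℝ), s ⊆ σ ∪ σ' ∧ s.card = 5 ∧
      ∃ w : (Fin 3 → ℝ) → ℝ,
        (∑ x ∈ s, w x) = 0 ∧
        (∑ x ∈ s, w x • x) = 0 ∧
        (∃ x ∈ s, w x ≠ 0) ∧
        (∀ x ∈ s, 0 < w x → x ∈ σ) ∧
        (∀ x ∈ s, w x < 0 → x ∈ σ') ∧
        (∃! p : Fin 3 → ℝ,
          p ∈ convexHull ℝ {x | x ∈ s ∧ 0 < w x} ∩ convexHull ℝ {x | x ∈ s ∧ w x < 0}) := by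
  classical
  have hA4 : 4 ≤ A.card := hσcard ▸ Finset.card_le_card hσA
  -- minimal good dependence
  obtain ⟨s0, w0, hg0⟩ := exists_good σ σ' himproper
  set S : Set ℕ := {k | ∃ s w, IsGood σ σ' s w ∧ s.card = k} with hS
  have hSne : S.Nonempty := ⟨s0.card, s0, w0, hg0, rfl⟩
  obtain ⟨s, w, hg, hcard⟩ : sInf S ∈ S := Nat.sInf_mem hSne
  have hmin : ∀ (s' : Finset (Fin 3 → ℝ)) (w' : (Fin 3 → ℝ) → ℝ),
      IsGood σ σ' s' w' → s.card ≤ s'.card := by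
    intro s' w' h
    rw [hcard]
    exact Nat.sInf_le ⟨s', w', h, rfl⟩
  obtain ⟨hs1, hs2, hs3, hs4, hs5, hs6, hs7⟩ := hg
  have hsA : s ⊆ A := hs1.trans (Finset.union_subset hσA hσ'A)
  -- card = 5
  have hge5 : 5 ≤ s.card := by
    by_contra h
    have h4 : s.card ≤ 4 := by omega
    obtain ⟨x, hx⟩ := hs5
    exact hs4 x hx (gp_dep_zero A hgen hA4 s hsA h4 w hs2 hs3 x hx)
  have hle5 : s.card ≤ 5 := by
    by_contra h
    obtain ⟨s', w', hg', hlt⟩ := reduce_good σ σ' s w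
      ⟨hs1, hs2, hs3, hs4, hs5, hs6, hs7⟩ (by omega)
    exact absurd (hmin s' w' hg') (by omega)
  have hcard5 : s.card = 5 := le_antisymm hle5 hge5
  -- positive and negative parts
  set pos : Finset (Fin 3 → ℝ) := s.filter (fun x => 0 < w x) with hpos
  set neg : Finset (Fin 3 → ℝ) := s.filter (fun x => w x < 0) with hneg
  have hnegeq : s.filter (fun x => ¬ 0 < w x) = neg := by
    apply Finset.filter_congr
    intro x hx
    simp only [not_lt]
    exact ⟨fun h => lt_of_le_of_ne h (hs4 x hx), le_of_lt⟩
  have hsplitw : (∑ x ∈ pos, w x) + (∑ x ∈ neg, w x) = 0 := by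
    rw [← hnegeq]
    rw [Finset.sum_filter_add_sum_filter_not s (fun x => 0 < w x) w]
    exact hs2
  have hsplitv : (∑ x ∈ pos, w x • x) + (∑ x ∈ neg, w x • x) = 0 := by
    rw [← hnegeq]
    rw [Finset.sum_filter_add_sum_filter_not s (fun x => 0 < w x) (fun x => w x • x)]
    exact hs3
  have hposne : pos.Nonempty := by
    rw [Finset.nonempty_iff_ne_empty]
    intro hempty
    have hallneg : ∀ x ∈ s, w x < 0 := by
      intro x hx
      rcases lt_trichotomy (w x) 0 with h | h | h
      · exact h
      · exact absurd h (hs4 x hx)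
      · exfalso
        have hmem : x ∈ pos := Finset.mem_filter.mpr ⟨hx, h⟩
        rw [hempty] at hmem
        exact Finset.notMem_empty x hmem
    have := Finset.sum_neg hallneg hs5
    linarith [hs2, this]
  set W : ℝ := ∑ x ∈ pos, w x with hW
  have hWpos : 0 < W :=
    Finset.sum_pos (fun x hx => (Finset.mem_filter.mp hx).2) hposne
  have hWne : W ≠ 0 := ne_of_gt hWpos
  have hposs : pos ⊆ s := Finset.filter_subset _ _
  have hnegs : neg ⊆ s := Finset.filter_subset _ _
  -- sets equal coercions
  have hsetpos : {x | x ∈ s ∧ 0 < w x} = (pos : Set (Fin 3 → ℝ)) := by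
    ext x; simp [hpos]
  have hsetneg : {x | x ∈ s ∧ w x < 0} = (neg : Set (Fin 3 → ℝ)) := by
    ext x; simp [hneg]
  -- the Radon point
  set q : Fin 3 → ℝ := W⁻¹ • (∑ x ∈ pos, w x • x) with hq
  have hrep : ∀ x, (w x / W) • x = W⁻¹ • (w x • x) := by
    intro x; rw [smul_smul, div_eq_inv_mul]
  have hq1 : q ∈ convexHull ℝ (pos : Set (Fin 3 → ℝ)) := by
    apply Finset.mem_convexHull'.mpr
    refine ⟨fun x => w x / W, ?_, ?_, ?_⟩
    · intro y hy
      exact div_nonneg (le_of_lt (Finset.mem_filter.mp hy).2) (le_of_lt hWpos)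
    · rw [← Finset.sum_div, ← hW, div_self hWne]
    · simp only [hrep, ← Finset.smul_sum, hq]
  have hnegW : ∑ x ∈ neg, -w x = W := by
    rw [Finset.sum_neg_distrib]; linarith
  have hnegv : ∑ x ∈ neg, (-w x) • x = ∑ x ∈ pos, w x • x := by
    have : ∑ x ∈ neg, (-w x) • x = -∑ x ∈ neg, w x • x := by
      simp [neg_smul, Finset.sum_neg_distrib]
    rw [this]
    exact neg_eq_of_add_eq_zero_left hsplitv
  have hq2 : q ∈ convexHull ℝ (neg : Set (Fin 3 → ℝ)) := by
    apply Finset.mem_convexHull'.mpr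
    refine ⟨fun x => -w x / W, ?_, ?_, ?_⟩
    · intro y hy
      exact div_nonneg (by linarith [(Finset.mem_filter.mp hy).2]) (le_of_lt hWpos)
    · rw [← Finset.sum_div, hnegW, div_self hWne]
    · have : ∀ x, (-w x / W) • x = W⁻¹ • ((-w x) • x) := by
        intro x; rw [smul_smul, div_eq_inv_mul]
      simp only [this, ← Finset.smul_sum, hnegv, hq]
  refine ⟨s, hs1, hcard5, w, hs2, hs3,
    (by obtain ⟨x, hx⟩ := hs5; exact ⟨x, hx, hs4 x hx⟩), hs6, hs7, ?_⟩
  rw [hsetpos, hsetneg]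
  refine ⟨q, ⟨hq1, hq2⟩, ?_⟩
  -- uniqueness
  rintro q' ⟨hq'1, hq'2⟩
  obtain ⟨α, hα0, hα1, hα2⟩ := Finset.mem_convexHull'.mp hq'1
  obtain ⟨β, hβ0, hβ1, hβ2⟩ := Finset.mem_convexHull'.mp hq'2
  -- the difference dependence
  set d : (Fin 3 → ℝ) → ℝ := fun x =>
    (if x ∈ pos then α x else 0) - (if x ∈ neg then β x else 0) - w x / W with hd
  have hposneg : ∀ x ∈ pos, x ∉ neg := by
    intro x hx hxn
    have h1 := (Finset.mem_filter.mp hx).2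
    have h2 := (Finset.mem_filter.mp hxn).2
    linarith
  have hαs : ∑ x ∈ s, (if x ∈ pos then α x else 0) = 1 := by
    rw [← Finset.sum_subset hposs (fun x _ hx => if_neg hx), ← hα1]
    exact Finset.sum_congr rfl fun x hx => if_pos hx
  have hβs : ∑ x ∈ s, (if x ∈ neg then β x else 0) = 1 := by
    rw [← Finset.sum_subset hnegs (fun x _ hx => if_neg hx), ← hβ1]
    exact Finset.sum_congr rfl fun x hx => if_pos hx
  have hαsv : ∑ x ∈ s, (if x ∈ pos then α x else 0) • x = q' := by
    rw [← Finset.sum_subset hposs (fun x _ hx => by rw [if_neg hx, zero_smul]), ← hα2]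
    exact Finset.sum_congr rfl fun x hx => by rw [if_pos hx]
  have hβsv : ∑ x ∈ s, (if x ∈ neg then β x else 0) • x = q' := by
    rw [← Finset.sum_subset hnegs (fun x _ hx => by rw [if_neg hx, zero_smul]), ← hβ2]
    exact Finset.sum_congr rfl fun x hx => by rw [if_pos hx]
  have hwWs : ∑ x ∈ s, w x / W = 0 := by
    rw [← Finset.sum_div, hs2, zero_div]
  have hwWsv : ∑ x ∈ s, (w x / W) • x = 0 := by
    simp only [hrep, ← Finset.smul_sum, hs3, smul_zero]
  have hd0 : ∑ x ∈ s, d x = 0 := by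
    simp only [hd, Finset.sum_sub_distrib, hαs, hβs, hwWs, sub_zero, sub_self]
  have hd1 : ∑ x ∈ s, d x • x = 0 := by
    have : ∀ x, d x • x = (if x ∈ pos then α x else 0) • x -
        (if x ∈ neg then β x else 0) • x - (w x / W) • x := by
      intro x; simp [hd, sub_smul]
    simp only [this, Finset.sum_sub_distrib, hαsv, hβsv, hwWsv, sub_zero, sub_self]
  obtain ⟨z, hz⟩ := hposne
  have hzs : z ∈ s := hposs hz
  have hdm := dep_multiple A hgen hA4 s hsA hcard5 w hs2 hs3 hs4 d hd0 hd1 z hzs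
  -- sum of d over pos
  have hdpos : ∑ x ∈ pos, d x = 0 := by
    have : ∀ x ∈ pos, d x = α x - w x / W := by
      intro x hx
      simp only [hd, if_pos hx, if_neg (hposneg x hx), sub_zero]
    rw [Finset.sum_congr rfl this, Finset.sum_sub_distrib, hα1, ← Finset.sum_div, ← hW,
      div_self hWne, sub_self]
  have hdpos' : ∑ x ∈ pos, d x = (d z / w z) * W := by
    rw [Finset.sum_congr rfl (fun x hx => hdm x (hposs hx)), ← Finset.mul_sum, ← hW]
  have hczero : d z / w z = 0 := by
    have : (d z / w z) * W = 0 := by rw [← hdpos', hdpos]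
    exact (mul_eq_zero.mp this).resolve_right hWne
  have hdall : ∀ x ∈ s, d x = 0 := by
    intro x hx
    rw [hdm x hx, hczero, zero_mul]
  have hαW : ∀ x ∈ pos, α x = w x / W := by
    intro x hx
    have := hdall x (hposs hx)
    simp only [hd, if_pos hx, if_neg (hposneg x hx), sub_zero] at this
    linarith
  rw [← hα2, Finset.sum_congr rfl (fun x hx => by rw [hαW x hx]), hq]
  simp only [hrep, ← Finset.smul_sum]
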